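/- arXiv:2503.08178 — 5 statements merged into one kernel-verified Lean document; each statement's English description precedes it below -/
import Mathlib

section
/- If B is a minimum weight basis at λ, and at a nearby point λ' the only change in the ordering of element weights is that a pair (e,f) with w(e,λ) < w(f,λ) swaps to w(f,λ') < w(e,λ'), and all other strict pairwise comparisons are preserved, then either B or B − e + f (if independent) is a minimum weight basis at λ'. More precisely: if B is optimal for a weight function c : E → ℝ and c' : E → ℝ induces the same strict order on E except that e and f are transposed (with e,f adjacent in the order), then some basis B' with |B Δ B'| ≤ 2 and B' ⊆ (B ∪ {f}) is optimal for c'. -/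
/-!
With injective weights, a minimum weight basis is the greedy one: an element `x` belongs to it
exactly when `x` is not spanned by the elements that are strictly lighter than `x`. When only the
order of `e` and `f` changes, the set of elements lighter than `x` is unchanged unless
`x ∈ {e, f}`, and the elements lighter than `e` only gain `f`. So the two optimal bases agree off
`{e, f}`, and `e` can only leave.
-/

open Set

namespace Matroid

variable {α : Type*} {M : Matroid α} {c : α → ℝ} {B : Set α} {x y : α}

def IsMinWeightBase (M : Matroid α) (c : α → ℝ) (B : Set α) : Prop :=
  M.IsBase B ∧ ∀ B', M.IsBase B' → ∑ᶠ x ∈ B, c x ≤ ∑ᶠ x ∈ B', c x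

lemma exists_isMinWeightBase (M : Matroid α) [M.Finite] (c : α → ℝ) :
    ∃ B, M.IsMinWeightBase c B := by
  have hfin : {B | M.IsBase B}.Finite :=
    M.ground_finite.finite_subsets.subset fun _ hB ↦ hB.subset_ground
  obtain ⟨B, hB, hmin⟩ := exists_min_image _ (fun B ↦ ∑ᶠ x ∈ B, c x) hfin M.exists_isBase
  exact ⟨B, hB, hmin⟩

lemma IsMinWeightBase.le_of_isBase_exchange [M.RankFinite] (hB : M.IsMinWeightBase c B)
    (hx : x ∈ B) (hy : y ∉ B) (hxy : M.IsBase (insert y (B \ {x}))) : c x ≤ c y := by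
  have hfin : (B \ {x}).Finite := hB.1.finite.sdiff
  have hsplit : ∑ᶠ z ∈ B, c z = c x + ∑ᶠ z ∈ B \ {x}, c z := by
    rw [← finsum_mem_insert c (fun h ↦ h.2 rfl) hfin, insert_sdiff_singleton,
      insert_eq_of_mem hx]
  have := hB.2 _ hxy
  rw [finsum_mem_insert c (fun h ↦ hy h.1) hfin, hsplit] at this
  linarith

lemma IsMinWeightBase.mem_iff [M.RankFinite] (hB : M.IsMinWeightBase c B)
    (hc : Function.Injective c) :
    x ∈ B ↔ x ∈ M.E ∧ x ∉ M.closure {y | c y < c x} := by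
  constructor
  · intro hxB
    refine ⟨hB.1.subset_ground hxB, fun hcl ↦ ?_⟩
    -- a lighter element outside the closure of `B \ {x}` could replace `x`
    have hescape : ¬ {y | c y < c x} ∩ M.E ⊆ M.closure (B \ {x}) := fun h ↦
      hB.1.indep.notMem_closure_sdiff_of_mem hxB
        (M.closure_subset_closure_of_subset_closure h (by rwa [closure_inter_ground]))
    obtain ⟨y, ⟨hyx, hyE⟩, hycl⟩ := not_subset.1 hescape
    have hyB : y ∉ B := fun hyB ↦ hycl <|
      M.subset_closure _ (sdiff_subset.trans hB.1.subset_ground) ⟨hyB, by rintro rfl; exact (lt_irrefl _ : ¬ c y < c y) hyx⟩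
    exact (hB.le_of_isBase_exchange hxB hyB
      (hB.1.exchange_base_of_notMem_closure hxB hycl)).not_gt hyx
  · rintro ⟨hxE, hxcl⟩
    by_contra hxB
    have hC := hB.1.fundCircuit_isCircuit hxE hxB
    refine hxcl (M.closure_mono ?_ (hC.mem_closure_sdiff_singleton_of_mem (M.mem_fundCircuit x B)))
    -- every other element of the fundamental circuit of `x` can be exchanged for `x`
    rintro y ⟨hyC, hyx : y ≠ x⟩
    have hyB : y ∈ B := (M.fundCircuit_subset_insert x B hyC).resolve_left hyx
    have hind := (hB.1.indep.mem_fundCircuit_iff (by rwa [hB.1.closure_eq]) hxB).1 hyC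
    rw [← insert_sdiff_singleton_comm hyx.symm] at hind
    exact (hB.le_of_isBase_exchange hyB hxB
      (hB.1.exchange_isBase_of_indep hxB hind)).lt_of_ne (hc.ne hyx)

end Matroid

section Transposition

variable {α : Type*} {c c' : α → ℝ} {e f x : α}

lemma setOf_lt_eq_of_ne_of_ne
    (hsame : ∀ x y : α, ¬ (x = e ∧ y = f) → ¬ (x = f ∧ y = e) → (c x < c y ↔ c' x < c' y))
    (hxe : x ≠ e) (hxf : x ≠ f) : {y | c' y < c' x} = {y | c y < c x} := by
  ext y
  exact (hsame y x (fun h ↦ hxf h.2) (fun h ↦ hxe h.2)).symm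

lemma setOf_lt_eq_insert_of_swap (hef : e ≠ f) (hlt' : c' f < c' e)
    (hsame : ∀ x y : α, ¬ (x = e ∧ y = f) → ¬ (x = f ∧ y = e) → (c x < c y ↔ c' x < c' y)) :
    {y | c' y < c' e} = insert f {y | c y < c e} := by
  ext y
  simp only [mem_ofPred_eq, mem_insert_iff]
  obtain rfl | hyf := eq_or_ne y f
  · exact iff_of_true hlt' (Or.inl rfl)
  · rw [or_iff_right hyf]
    exact (hsame y e (fun h ↦ hef h.2) (fun h ↦ hyf h.1)).symm

end Transposition

theorem swap_optimal_basis_general {α : Type*} [Fintype α] (M : Matroid α)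
    (c c' : α → ℝ) (hc : Function.Injective c) (hc' : Function.Injective c')
    (e f : α) (hef : e ≠ f)
    (hlt' : c' f < c' e)
    (hsame : ∀ x y : α, ¬ (x = e ∧ y = f) → ¬ (x = f ∧ y = e) →
      (c x < c y ↔ c' x < c' y))
    (B : Set α) (hB : M.IsBase B)
    (hopt : ∀ B', M.IsBase B' → (∑ᶠ x ∈ B, c x) ≤ ∑ᶠ x ∈ B', c x) :
    ∃ B', M.IsBase B' ∧ (symmDiff B B').ncard ≤ 2 ∧ B' ⊆ B ∪ {f} ∧
      ∀ B'', M.IsBase B'' → (∑ᶠ x ∈ B', c' x) ≤ ∑ᶠ x ∈ B'', c' x := by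
  have hBc : M.IsMinWeightBase c B := ⟨hB, hopt⟩
  obtain ⟨B', hB'⟩ := M.exists_isMinWeightBase c'
  have hagree : ∀ x, x ≠ e → x ≠ f → (x ∈ B' ↔ x ∈ B) := fun x hxe hxf ↦ by
    rw [hB'.mem_iff hc', hBc.mem_iff hc, setOf_lt_eq_of_ne_of_ne hsame hxe hxf]
  have he : e ∈ B' → e ∈ B := by
    rw [hB'.mem_iff hc', hBc.mem_iff hc, setOf_lt_eq_insert_of_swap hef hlt' hsame]
    exact And.imp_right fun hcl hcl' ↦ hcl (M.closure_mono (subset_insert _ _) hcl')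
  refine ⟨B', hB'.1, ?_, fun x hx ↦ ?_, hB'.2⟩
  · have hsub : symmDiff B B' ⊆ {e, f} := by
      intro x hx
      by_contra hxef
      simp only [mem_insert_iff, mem_singleton_iff, not_or] at hxef
      rw [mem_symmDiff, hagree x hxef.1 hxef.2] at hx
      tauto
    exact (ncard_le_ncard hsub).trans (ncard_pair hef).le
  · obtain rfl | hxe := eq_or_ne x e
    · exact Or.inl (he hx)
    obtain rfl | hxf := eq_or_ne x f
    · exact Or.inr rfl
    · exact Or.inl ((hagree x hxe hxf).1 hx)

/-- Pivot/swap lemma: if `B` is a minimum weight basis for the weight function `c`,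
and `c'` induces the same strict order on the ground set except that the two
adjacent elements `e` and `f` (with `c e < c f`) are transposed, then some basis
`B'` with `|B ∆ B'| ≤ 2` and `B' ⊆ B ∪ {f}` is a minimum weight basis for `c'`. -/
theorem swap_optimal_basis {α : Type*} [Fintype α] (M : Matroid α)
    (c c' : α → ℝ) (hc : Function.Injective c) (hc' : Function.Injective c')
    (e f : α) (hef : e ≠ f)
    (hlt : c e < c f) (hlt' : c' f < c' e)
    (hadj : ∀ g : α, ¬ (c e < c g ∧ c g < c f))
    (hsame : ∀ x y : α, ¬ (x = e ∧ y = f) → ¬ (x = f ∧ y = e) →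
      (c x < c y ↔ c' x < c' y))
    (B : Set α) (hB : M.IsBase B)
    (hopt : ∀ B', M.IsBase B' → (∑ᶠ x ∈ B, c x) ≤ ∑ᶠ x ∈ B', c x) :
    ∃ B', M.IsBase B' ∧ (symmDiff B B').ncard ≤ 2 ∧ B' ⊆ B ∪ {f} ∧
      ∀ B'', M.IsBase B'' → (∑ᶠ x ∈ B', c' x) ≤ ∑ᶠ x ∈ B'', c' x :=
  swap_optimal_basis_general M c c' hc hc' e f hef hlt' hsame B hB hopt
end

section
/- In a matroid, the optimality of a basis under a weight function depends only on the induced ordering of the ground set: if c and c' are weight functions on E inducing the same (weak) order, i.e., c(e) ≤ c(f) ↔ c'(e) ≤ c'(f) for all e,f, then a basis B is of minimum c-weight if and only if it is of minimum c'-weight. -/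
open Set Finset

/-! A basis `B` has minimum weight iff for every threshold `t` no basis has more elements of
weight `≤ t` than `B`. A basis beating `B` at some threshold yields, via a fundamental circuit,
an exchange of an element of `B` above `t` for one below it, hence a lighter basis; conversely,
domination at every threshold gives the sum inequality by pairing the elements of both bases in
increasing order of weight. The thresholds can be taken among the weights `c a`, and the
sublevel sets `{x | c x ≤ c a}` depend only on the order induced by `c`. -/

section Majorization

variable {ι β : Type*} [AddCommMonoid β] [LinearOrder β] [IsOrderedAddMonoid β] {c : ι → β}

theorem Finset.sum_le_sum_of_card_filter_le [DecidableEq ι] {s t : Finset ι} (hcard : #s = #t)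
    (h : ∀ a, #{x ∈ t | c x ≤ c a} ≤ #{x ∈ s | c x ≤ c a}) :
    ∑ x ∈ s, c x ≤ ∑ x ∈ t, c x := by
  induction t using Finset.strongInduction generalizing s with
  | H t ih =>
  rcases t.eq_empty_or_nonempty with rfl | ht
  · simp [Finset.card_eq_zero.1 hcard]
  obtain ⟨e', he't, he'min⟩ := t.exists_min_image c ht
  obtain ⟨e, hes, hee'⟩ : ∃ e ∈ s, c e ≤ c e' := by
    have he' : e' ∈ {x ∈ t | c x ≤ c e'} := Finset.mem_filter.2 ⟨he't, le_rfl⟩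
    obtain ⟨e, he⟩ := Finset.card_pos.1 ((Finset.card_pos.2 ⟨e', he'⟩).trans_le (h e'))
    exact ⟨e, (Finset.mem_filter.1 he).1, (Finset.mem_filter.1 he).2⟩
  have herase : ∀ a, #{x ∈ t.erase e' | c x ≤ c a} ≤ #{x ∈ s.erase e | c x ≤ c a} := by
    intro a
    rcases le_or_gt (c e') (c a) with hle | hlt
    · rw [Finset.filter_erase, Finset.filter_erase,
        Finset.card_erase_of_mem (Finset.mem_filter.2 ⟨he't, hle⟩),
        Finset.card_erase_of_mem (Finset.mem_filter.2 ⟨hes, hee'.trans hle⟩)]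
      exact Nat.sub_le_sub_right (h a) 1
    · have : {x ∈ t.erase e' | c x ≤ c a} = ∅ := Finset.filter_eq_empty_iff.2
        fun x hx hxa => not_lt.2 (he'min x (Finset.mem_of_mem_erase hx)) (hxa.trans_lt hlt)
      simp [this]
  calc ∑ x ∈ s, c x = c e + ∑ x ∈ s.erase e, c x := (Finset.add_sum_erase _ _ hes).symm
    _ ≤ c e' + ∑ x ∈ t.erase e', c x := add_le_add hee' <| ih _ (Finset.erase_ssubset he't)
        (by rw [Finset.card_erase_of_mem hes, Finset.card_erase_of_mem he't, hcard]) herase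
    _ = ∑ x ∈ t, c x := Finset.add_sum_erase _ _ he't

theorem Set.Finite.finsum_mem_le_of_ncard_sep_le {s t : Set ι} (hs : s.Finite) (ht : t.Finite)
    (hcard : s.ncard = t.ncard) (h : ∀ a, {x ∈ t | c x ≤ c a}.ncard ≤ {x ∈ s | c x ≤ c a}.ncard) :
    ∑ᶠ x ∈ s, c x ≤ ∑ᶠ x ∈ t, c x := by
  classical
  lift s to Finset ι using hs
  lift t to Finset ι using ht
  rw [ncard_coe_finset, ncard_coe_finset] at hcard
  simp only [finsum_mem_coe_finset]
  refine Finset.sum_le_sum_of_card_filter_le hcard fun a => ?_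
  rw [← ncard_coe_finset, ← ncard_coe_finset, Finset.coe_filter, Finset.coe_filter]
  exact h a

end Majorization

theorem finsum_mem_insert_sdiff_singleton_add {ι β : Type*} [AddCommMonoid β] (c : ι → β)
    {s : Set ι} {e f : ι} (hs : s.Finite) (he : e ∉ s) (hf : f ∈ s) :
    (∑ᶠ x ∈ insert e s \ {f}, c x) + c f = (∑ᶠ x ∈ s, c x) + c e := by
  classical
  lift s to Finset ι using hs
  rw [← Finset.coe_insert, ← Finset.coe_singleton, ← Finset.coe_sdiff, finsum_mem_coe_finset,
    finsum_mem_coe_finset, Finset.sdiff_singleton_eq_erase,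
    Finset.sum_erase_add _ _ (Finset.mem_insert_of_mem hf), Finset.sum_insert he, add_comm]

namespace Matroid

variable {α : Type*} {M : Matroid α} {B I : Set α} {e : α}

/-- The fundamental circuit of `e` in `B` cannot lie inside the independent set `insert e I`,
so it meets `B \ I`; removing any of its elements from `insert e B` leaves a base. -/
theorem IsBase.exists_isBase_insert_sdiff_of_indep_insert (hB : M.IsBase B) (heB : e ∉ B)
    (hI : M.Indep (insert e I)) : ∃ f ∈ B \ I, M.IsBase (insert e B \ {f}) := by
  have heE : e ∈ M.E := hI.subset_ground (mem_insert e I)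
  have hecl : e ∈ M.closure B := hB.closure_eq ▸ heE
  obtain ⟨f, hfC, hfI⟩ := not_subset.1 fun hsub =>
    (hB.fundCircuit_isCircuit heE heB).not_indep (hI.subset hsub)
  have hfe : f ≠ e := by rintro rfl; exact hfI (mem_insert f I)
  have hfB : f ∈ B := (mem_insert_iff.1 (M.fundCircuit_subset_insert e B hfC)).resolve_left hfe
  refine ⟨f, ⟨hfB, fun h => hfI (mem_insert_of_mem e h)⟩, ?_⟩
  exact hB.exchange_isBase_of_indep' hfB heB ((hB.indep.mem_fundCircuit_iff hecl heB).1 hfC)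

section Weights

variable {β : Type*} [AddCommMonoid β] [LinearOrder β] [IsOrderedCancelAddMonoid β] (c : α → β)

theorem IsBase.ncard_sep_le_of_forall_finsum_le [M.RankFinite] (hB : M.IsBase B)
    (hmin : ∀ B', M.IsBase B' → ∑ᶠ x ∈ B, c x ≤ ∑ᶠ x ∈ B', c x) {B' : Set α} (hB' : M.IsBase B')
    (t : β) : {x ∈ B' | c x ≤ t}.ncard ≤ {x ∈ B | c x ≤ t}.ncard := by
  by_contra! hlt
  have hIJ : {x ∈ B | c x ≤ t}.encard < {x ∈ B' | c x ≤ t}.encard := by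
    rwa [← (hB.finite.subset (sep_subset _ _)).cast_ncard_eq,
      ← (hB'.finite.subset (sep_subset _ _)).cast_ncard_eq, Nat.cast_lt]
  obtain ⟨e, ⟨⟨heB', het⟩, heI⟩, hind⟩ :=
    (hB.indep.subset (sep_subset _ _)).augment (hB'.indep.subset (sep_subset _ _)) hIJ
  have heB : e ∉ B := fun h => heI ⟨h, het⟩
  obtain ⟨f, ⟨hfB, hfI⟩, hB''⟩ := hB.exists_isBase_insert_sdiff_of_indep_insert heB hind
  have htf : t < c f := lt_of_not_ge fun h => hfI ⟨hfB, h⟩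
  have hswap := finsum_mem_insert_sdiff_singleton_add c hB.finite heB hfB
  refine (hmin _ hB'').not_gt (lt_of_add_lt_add_right (a := c f) ?_)
  calc (∑ᶠ x ∈ insert e B \ {f}, c x) + c f = (∑ᶠ x ∈ B, c x) + c e := hswap
    _ < (∑ᶠ x ∈ B, c x) + c f := add_lt_add_right (het.trans_lt htf) _

theorem IsBase.forall_finsum_le_iff [M.RankFinite] (hB : M.IsBase B) :
    (∀ B', M.IsBase B' → ∑ᶠ x ∈ B, c x ≤ ∑ᶠ x ∈ B', c x) ↔
      ∀ B', M.IsBase B' → ∀ a, {x ∈ B' | c x ≤ c a}.ncard ≤ {x ∈ B | c x ≤ c a}.ncard :=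
  ⟨fun hmin _ hB' a => hB.ncard_sep_le_of_forall_finsum_le c hmin hB' (c a),
    fun h B' hB' => hB.finite.finsum_mem_le_of_ncard_sep_le hB'.finite
      (hB.ncard_eq_ncard_of_isBase hB') (h B' hB')⟩

end Weights

end Matroid

/-- In a matroid, optimality of a basis depends only on the induced (weak) order
of the weights: if `c` and `c'` induce the same order then a basis is of minimum
`c`-weight iff it is of minimum `c'`-weight. -/
theorem optimality_depends_only_on_order {α : Type*} [Fintype α] (M : Matroid α)
    (c c' : α → ℝ) (horder : ∀ e f : α, c e ≤ c f ↔ c' e ≤ c' f)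
    (B : Set α) (hB : M.IsBase B) :
    (∀ B', M.IsBase B' → (∑ᶠ x ∈ B, c x) ≤ ∑ᶠ x ∈ B', c x) ↔
      (∀ B', M.IsBase B' → (∑ᶠ x ∈ B, c' x) ≤ ∑ᶠ x ∈ B', c' x) := by
  simp only [hB.forall_finsum_le_iff, horder]
end

section
/- If c and c' are two injective weight functions on the ground set of a matroid inducing the same strict linear order, then the minimum weight basis is the same for c and c' (and it is unique). -/
/-!
If `B ≠ D` are bases minimal for `c` and `c'` respectively, let `e` be the `c`-lightest element of
`B ∆ D`. The reverse exchange property (basis exchange in the dual matroid) puts `e` into whichever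
of the two bases misses it, in place of some `f` of `B ∆ D`. Then `c e < c f` and `c' e < c' f`,
so the exchange strictly lightens that base for its own weight, contradicting minimality.
-/

open Set Function
open scoped symmDiff

theorem finsum_mem_insert_sdiff_singleton_add_s8 {α M : Type*} [AddCommMonoid M] (g : α → M)
    {s : Set α} {a b : α} (ha : a ∉ s) (hb : b ∈ s) (hs : s.Finite) :
    ∑ᶠ i ∈ insert a (s \ {b}), g i + g b = ∑ᶠ i ∈ s, g i + g a := by
  have hsb : b ∉ s \ {b} := fun h => h.2 rfl
  conv_rhs => rw [← insert_sdiff_self_of_mem hb, finsum_mem_insert g hsb hs.sdiff]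
  rw [finsum_mem_insert g (fun h => ha h.1) hs.sdiff]
  abel

namespace Matroid

variable {α : Type*} {M : Matroid α} {B₁ B₂ : Set α} {e : α}

theorem IsBase.exists_insert_sdiff_singleton_isBase (hB₁ : M.IsBase B₁) (hB₂ : M.IsBase B₂)
    (he : e ∈ B₁ \ B₂) : ∃ f ∈ B₂ \ B₁, M.IsBase (insert e (B₂ \ {f})) := by
  have heE : e ∈ M.E := hB₁.subset_ground he.1
  obtain ⟨f, ⟨⟨hfE, hfB₁⟩, hfB₂⟩, hf⟩ := hB₂.compl_isBase_dual.exchange hB₁.compl_isBase_dual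
    (e := e) ⟨⟨heE, he.2⟩, fun h => h.2 he.1⟩
  have hfB₂ : f ∈ B₂ := by simpa [hfE] using hfB₂
  refine ⟨f, ⟨hfB₂, hfB₁⟩, ?_⟩
  convert hf.compl_isBase_of_dual using 1
  ext x
  have hxE : x ∈ B₂ → x ∈ M.E := fun hx => hB₂.subset_ground hx
  simp only [mem_insert_iff, mem_sdiff, mem_singleton_iff]
  grind

variable {β γ : Type*} [AddCommMonoid β] [LinearOrder β] [AddCommMonoid γ] [LinearOrder γ]

def IsMinBase (M : Matroid α) (c : α → β) (B : Set α) : Prop :=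
  M.IsBase B ∧ ∀ B', M.IsBase B' → ∑ᶠ x ∈ B, c x ≤ ∑ᶠ x ∈ B', c x

theorem exists_isMinBase (M : Matroid α) [M.Finite] (c : α → β) : ∃ B, M.IsMinBase c B := by
  have hfin : {B | M.IsBase B}.Finite :=
    M.ground_finite.finite_subsets.subset fun _ hB => hB.subset_ground
  obtain ⟨B, hB, hmin⟩ := exists_min_image _ (fun B => ∑ᶠ x ∈ B, c x) hfin M.exists_isBase
  exact ⟨B, hB, hmin⟩

variable [IsOrderedCancelAddMonoid β] [IsOrderedCancelAddMonoid γ]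

theorem IsMinBase.le_of_isBase_insert_sdiff [M.RankFinite] {c : α → β} {B : Set α} {f : α}
    (hB : M.IsMinBase c B) (he : e ∉ B) (hf : f ∈ B) (h : M.IsBase (insert e (B \ {f}))) :
    c f ≤ c e := by
  have hle : ∑ᶠ x ∈ B, c x + c f ≤ ∑ᶠ x ∈ B, c x + c e :=
    calc ∑ᶠ x ∈ B, c x + c f ≤ ∑ᶠ x ∈ insert e (B \ {f}), c x + c f := by gcongr; exact hB.2 _ h
      _ = ∑ᶠ x ∈ B, c x + c e := finsum_mem_insert_sdiff_singleton_add_s8 c he hf hB.1.finite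
  exact le_of_add_le_add_left hle

theorem IsMinBase.eq_of_lt_imp_lt [M.RankFinite] {c : α → β} {c' : α → γ} {B D : Set α}
    (hB : M.IsMinBase c B) (hD : M.IsMinBase c' D) (hc : Injective c)
    (hcc' : ∀ e f, c e < c f → c' e < c' f) : B = D := by
  by_contra hne
  obtain ⟨e, heBD, hmin⟩ := exists_min_image (B ∆ D) c
    ((hB.1.finite.union hD.1.finite).subset symmDiff_subset_union)
    (nonempty_iff_ne_empty.2 (by simpa [symmDiff_eq_bot] using hne))
  have hlt : ∀ f ∈ B ∆ D, f ≠ e → c e < c f := fun f hf hfe =>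
    (hmin f hf).lt_of_ne (hc.ne hfe.symm)
  rcases mem_symmDiff.1 heBD with ⟨heB, heD⟩ | ⟨heD, heB⟩
  · obtain ⟨f, ⟨hfD, hfB⟩, hf⟩ := hB.1.exists_insert_sdiff_singleton_isBase hD.1 ⟨heB, heD⟩
    exact (hD.le_of_isBase_insert_sdiff heD hfD hf).not_gt
      (hcc' _ _ (hlt f (Or.inr ⟨hfD, hfB⟩) (ne_of_mem_of_not_mem hfD heD)))
  · obtain ⟨f, ⟨hfB, hfD⟩, hf⟩ := hD.1.exists_insert_sdiff_singleton_isBase hB.1 ⟨heD, heB⟩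
    exact (hB.le_of_isBase_insert_sdiff heB hfB hf).not_gt
      (hlt f (Or.inl ⟨hfB, hfD⟩) (ne_of_mem_of_not_mem hfB heB))

theorem isMinBase_iff_of_lt_imp_lt [M.Finite] {c : α → β} {c' : α → γ} {B : Set α}
    (hc : Injective c) (hcc' : ∀ e f, c e < c f → c' e < c' f) :
    M.IsMinBase c B ↔ M.IsMinBase c' B := by
  obtain ⟨B₀, hB₀⟩ := M.exists_isMinBase c
  obtain ⟨D₀, hD₀⟩ := M.exists_isMinBase c'
  refine ⟨fun hB => ?_, fun hB => ?_⟩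
  · rwa [hB.eq_of_lt_imp_lt hD₀ hc hcc']
  · rwa [← hB₀.eq_of_lt_imp_lt hB hc hcc']

end Matroid

theorem unique_min_basis_same_order_general {α : Type*} [Fintype α] (M : Matroid α)
    (c c' : α → ℝ) (hc : Function.Injective c)
    (horder : ∀ e f : α, c e < c f ↔ c' e < c' f) :
    (∃! B, M.IsBase B ∧ ∀ B', M.IsBase B' → (∑ᶠ x ∈ B, c x) ≤ ∑ᶠ x ∈ B', c x) ∧
    (∀ B, (M.IsBase B ∧ ∀ B', M.IsBase B' → (∑ᶠ x ∈ B, c x) ≤ ∑ᶠ x ∈ B', c x) ↔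
          (M.IsBase B ∧ ∀ B', M.IsBase B' → (∑ᶠ x ∈ B, c' x) ≤ ∑ᶠ x ∈ B', c' x)) := by
  obtain ⟨B, hB⟩ := M.exists_isMinBase c
  exact ⟨⟨B, hB, fun _ hB' => Matroid.IsMinBase.eq_of_lt_imp_lt hB' hB hc fun _ _ => id⟩,
    fun _ => Matroid.isMinBase_iff_of_lt_imp_lt hc fun e f => (horder e f).1⟩

/-- If `c` and `c'` are injective weight functions inducing the same strict linear
order on the ground set, then the minimum weight basis is unique and is the same
for `c` and `c'`. -/
theorem unique_min_basis_same_order {α : Type*} [Fintype α] (M : Matroid α)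
    (hM : ∃ B, M.IsBase B)
    (c c' : α → ℝ) (hc : Function.Injective c) (hc' : Function.Injective c')
    (horder : ∀ e f : α, c e < c f ↔ c' e < c' f) :
    (∃! B, M.IsBase B ∧ ∀ B', M.IsBase B' → (∑ᶠ x ∈ B, c x) ≤ ∑ᶠ x ∈ B', c x) ∧
    (∀ B, (M.IsBase B ∧ ∀ B', M.IsBase B' → (∑ᶠ x ∈ B, c x) ≤ ∑ᶠ x ∈ B', c x) ↔
          (M.IsBase B ∧ ∀ B', M.IsBase B' → (∑ᶠ x ∈ B, c' x) ≤ ∑ᶠ x ∈ B', c' x)) :=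
  unique_min_basis_same_order_general M c c' hc horder
end

section
/- If two points λ₁, λ₂ ∈ ℝ^p lie in the same connected component of the complement of the union of all separating hyperplanes, then the (unique) minimum weight basis at λ₁ equals the (unique) minimum weight basis at λ₂. -/
/-!
For weights that are pairwise distinct, the exchange axiom forces the minimum weight basis to be
unique, hence a strict minimum: otherwise swap out the heaviest element of the symmetric
difference of two minimal bases. Being a strict minimum is an open condition in the parameter,
and distinct bases have disjoint such regions, so on the open set of parameters with distinct
weights these regions form a disjoint open cover; a connected component meets only one of them.
-/

open Function Set

theorem IsPreconnected.subset_of_pairwiseDisjoint_isOpen_cover {X ι : Type*} [TopologicalSpace X]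
    {s : Set X} (hs : IsPreconnected s) {U : ι → Set X} (hU : ∀ i, IsOpen (U i))
    (hdisj : Pairwise (Disjoint on U)) (hcover : s ⊆ ⋃ i, U i) {i : ι} {x : X} (hxs : x ∈ s)
    (hxi : x ∈ U i) : s ⊆ U i := by
  refine hs.subset_left_of_subset_union (v := ⋃ j ≠ i, U j) (hU i)
    (isOpen_biUnion fun j _ => hU j) ?_ ?_ ⟨x, hxs, hxi⟩
  · simp only [disjoint_iUnion_right]
    exact fun j hji => hdisj hji.symm
  · intro y hy
    obtain ⟨j, hj⟩ := mem_iUnion.1 (hcover hy)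
    by_cases hji : j = i
    · exact Or.inl (hji ▸ hj)
    · exact Or.inr (mem_biUnion hji hj)

theorem finsum_mem_insert_diff_singleton_add {α R : Type*} [AddCommMonoid R] (w : α → R)
    {s : Set α} (hs : s.Finite) {y g : α} (hy : y ∉ s) (hg : g ∈ s) :
    ∑ᶠ e ∈ insert y (s \ {g}), w e + w g = ∑ᶠ e ∈ s, w e + w y := by
  conv_rhs => rw [← insert_sdiff_self_of_mem hg, finsum_mem_insert w (by simp) hs.sdiff]
  rw [finsum_mem_insert w (fun h => hy h.1) hs.sdiff]
  abel

namespace Matroid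

variable {α R : Type*} [AddCommMonoid R] [LinearOrder R] {M : Matroid α} {B B' : Set α}

section Weight

variable [IsOrderedCancelAddMonoid R] {w : α → R}

theorem IsBase.exists_finsum_lt [M.RankFinite] (hB : M.IsBase B) (hB' : M.IsBase B') {g : α}
    (hg : g ∈ B' \ B) (hlt : ∀ y ∈ B \ B', w y < w g) :
    ∃ C, M.IsBase C ∧ ∑ᶠ e ∈ C, w e < ∑ᶠ e ∈ B', w e := by
  obtain ⟨y, hy, hC⟩ := hB'.exchange hB hg
  refine ⟨_, hC, lt_of_add_lt_add_right (a := w g) ?_⟩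
  rw [finsum_mem_insert_diff_singleton_add w hB'.finite hy.2 hg.1]
  exact (add_lt_add_iff_left _).2 (hlt y hy)

theorem IsBase.eq_of_forall_finsum_le [M.RankFinite] (hw : Injective w) (hB : M.IsBase B)
    (hB' : M.IsBase B') (hmin : ∀ C, M.IsBase C → ∑ᶠ e ∈ B, w e ≤ ∑ᶠ e ∈ C, w e)
    (hmin' : ∀ C, M.IsBase C → ∑ᶠ e ∈ B', w e ≤ ∑ᶠ e ∈ C, w e) : B = B' := by
  by_contra hne
  have hD : (B \ B' ∪ B' \ B).Nonempty := by
    rw [nonempty_iff_ne_empty, Ne, union_empty_iff, sdiff_eq_empty, sdiff_eq_empty]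
    exact fun h => hne (h.1.antisymm h.2)
  obtain ⟨g, hgD, hgmax⟩ :=
    exists_max_image _ w ((hB.finite.sdiff).union hB'.finite.sdiff) hD
  have hlt : ∀ y ∈ B \ B' ∪ B' \ B, y ≠ g → w y < w g := fun y hy hyg =>
    (hgmax y hy).lt_of_ne (hw.ne hyg)
  rcases hgD with hgB | hgB'
  · obtain ⟨C, hC, hCB⟩ := hB'.exists_finsum_lt hB hgB
      fun y hy => hlt y (Or.inr hy) fun h => hgB.2 (h ▸ hy.1)
    exact (hmin C hC).not_gt hCB
  · obtain ⟨C, hC, hCB'⟩ := hB.exists_finsum_lt hB' hgB'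
      fun y hy => hlt y (Or.inl hy) fun h => hgB'.2 (h ▸ hy.1)
    exact (hmin' C hC).not_gt hCB'

end Weight

section Locus

variable {X : Type*} {w : X → α → R}

def strictMinBaseLocus (M : Matroid α) (w : X → α → R) (B : Set α) : Set X :=
  {x | ∀ B', M.IsBase B' → B' ≠ B → ∑ᶠ e ∈ B, w x e < ∑ᶠ e ∈ B', w x e}

theorem disjoint_strictMinBaseLocus (hB : M.IsBase B) (hB' : M.IsBase B') (hne : B ≠ B') :
    Disjoint (M.strictMinBaseLocus w B) (M.strictMinBaseLocus w B') :=
  disjoint_left.2 fun _ hx hx' => (hx B' hB' hne.symm).asymm (hx' B hB hne)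

theorem forall_finsum_le_of_mem_strictMinBaseLocus {x : X} (hx : x ∈ M.strictMinBaseLocus w B)
    (hB' : M.IsBase B') : ∑ᶠ e ∈ B, w x e ≤ ∑ᶠ e ∈ B', w x e := by
  obtain rfl | hne := eq_or_ne B' B
  · rfl
  · exact (hx B' hB' hne).le

theorem IsBase.mem_strictMinBaseLocus [IsOrderedCancelAddMonoid R] [M.RankFinite] {x : X}
    (hw : Injective (w x)) (hB : M.IsBase B)
    (hmin : ∀ C, M.IsBase C → ∑ᶠ e ∈ B, w x e ≤ ∑ᶠ e ∈ C, w x e) :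
    x ∈ M.strictMinBaseLocus w B := fun B' hB' hne =>
  (hmin B' hB').lt_of_ne fun heq =>
    hne (hB'.eq_of_forall_finsum_le hw hB (fun C hC => heq ▸ hmin C hC) hmin)

theorem exists_mem_strictMinBaseLocus [IsOrderedCancelAddMonoid R] [Finite α] {x : X}
    (hw : Injective (w x)) :
    ∃ B, M.IsBase B ∧ x ∈ M.strictMinBaseLocus w B := by
  obtain ⟨B, hB, hmin⟩ := exists_min_image {B | M.IsBase B} (fun B => ∑ᶠ e ∈ B, w x e)
    (toFinite _) M.exists_isBase
  exact ⟨B, hB, hB.mem_strictMinBaseLocus hw hmin⟩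

end Locus

section Topology

variable {X : Type*} [TopologicalSpace X] [TopologicalSpace R] [OrderClosedTopology R]
  [ContinuousAdd R] {w : X → α → R}

theorem isOpen_strictMinBaseLocus [Finite α] (hw : ∀ e, Continuous fun x => w x e) :
    IsOpen (M.strictMinBaseLocus w B) := by
  have hcont (C : Set α) : Continuous fun x => ∑ᶠ e ∈ C, w x e := by
    simp_rw [finsum_mem_eq_finite_toFinset_sum _ C.toFinite]
    exact continuous_finsetSum _ fun e _ => hw e
  have : M.strictMinBaseLocus w B = ⋂ B' ∈ {B' | M.IsBase B' ∧ B' ≠ B},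
      {x | ∑ᶠ e ∈ B, w x e < ∑ᶠ e ∈ B', w x e} := by
    ext x
    simp [strictMinBaseLocus]
  rw [this]
  exact (toFinite _).isOpen_biInter fun B' _ => isOpen_lt (hcont B) (hcont B')

theorem forall_finsum_le_of_mem_connectedComponentIn [IsOrderedCancelAddMonoid R] [Finite α]
    (hw : ∀ e, Continuous fun x => w x e) {x y : X}
    (hy : y ∈ connectedComponentIn {z | Injective (w z)} x) (hB : M.IsBase B)
    (hmin : ∀ B', M.IsBase B' → ∑ᶠ e ∈ B, w x e ≤ ∑ᶠ e ∈ B', w x e) :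
    ∀ B', M.IsBase B' → ∑ᶠ e ∈ B, w y e ≤ ∑ᶠ e ∈ B', w y e := by
  have hx : Injective (w x) := connectedComponentIn_nonempty_iff.1 ⟨y, hy⟩
  let U : {B // M.IsBase B} → Set X := fun B => M.strictMinBaseLocus w B
  have hcover : connectedComponentIn {z | Injective (w z)} x ⊆ ⋃ B, U B := fun z hz => by
    obtain ⟨B, hB, hzB⟩ := exists_mem_strictMinBaseLocus (M := M)
      (connectedComponentIn_subset _ _ hz)
    exact mem_iUnion.2 ⟨⟨B, hB⟩, hzB⟩
  have hsub := isPreconnected_connectedComponentIn.subset_of_pairwiseDisjoint_isOpen_cover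
    (fun B => isOpen_strictMinBaseLocus hw)
    (fun B B' hne => disjoint_strictMinBaseLocus B.2 B'.2 (Subtype.coe_ne_coe.2 hne)) hcover
    (i := ⟨B, hB⟩) (mem_connectedComponentIn hx) (hB.mem_strictMinBaseLocus hx hmin)
  exact fun B' hB' => forall_finsum_le_of_mem_strictMinBaseLocus (hsub hy) hB'

end Topology

end Matroid

theorem same_cell_same_min_basis_general {α : Type*} [Fintype α] (M : Matroid α)
    {p : ℕ} (a : α → ℝ) (b : α → Fin p → ℝ)
    (lam₁ lam₂ : Fin p → ℝ)
    (h₁ : lam₁ ∈ {lam : Fin p → ℝ | ∀ e f : α, e ≠ f →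
      (a e + ∑ i, lam i * b e i) ≠ (a f + ∑ i, lam i * b f i)})
    (h₂ : lam₂ ∈ connectedComponentIn {lam : Fin p → ℝ | ∀ e f : α, e ≠ f →
      (a e + ∑ i, lam i * b e i) ≠ (a f + ∑ i, lam i * b f i)} lam₁) :
    ∀ B, M.IsBase B →
      ((∀ B', M.IsBase B' → (∑ᶠ e ∈ B, (a e + ∑ i, lam₁ i * b e i)) ≤
          ∑ᶠ e ∈ B', (a e + ∑ i, lam₁ i * b e i)) ↔
       (∀ B', M.IsBase B' → (∑ᶠ e ∈ B, (a e + ∑ i, lam₂ i * b e i)) ≤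
          ∑ᶠ e ∈ B', (a e + ∑ i, lam₂ i * b e i))) := by
  set w : (Fin p → ℝ) → α → ℝ := fun lam e => a e + ∑ i, lam i * b e i
  have hw (e : α) : Continuous fun lam => w lam e := by fun_prop
  have hS : {lam : Fin p → ℝ | ∀ e f : α, e ≠ f → w lam e ≠ w lam f} =
      {lam | Injective (w lam)} := by
    ext lam
    exact injective_iff_pairwise_ne.symm
  rw [hS] at h₁ h₂
  have h₁₂ : lam₁ ∈ connectedComponentIn {lam | Injective (w lam)} lam₂ :=
    connectedComponentIn_eq h₂ ▸ mem_connectedComponentIn h₁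
  exact fun B hB => ⟨Matroid.forall_finsum_le_of_mem_connectedComponentIn hw h₂ hB,
    Matroid.forall_finsum_le_of_mem_connectedComponentIn hw h₁₂ hB⟩

/-- If `λ₁` and `λ₂` lie in the same connected component of the complement of the
union of all separating hyperplanes, then the minimum weight bases at `λ₁` and at
`λ₂` coincide. -/
theorem same_cell_same_min_basis {α : Type*} [Fintype α] (M : Matroid α)
    (hM : ∃ B, M.IsBase B) {p : ℕ} (a : α → ℝ) (b : α → Fin p → ℝ)
    (lam₁ lam₂ : Fin p → ℝ)
    (h₁ : lam₁ ∈ {lam : Fin p → ℝ | ∀ e f : α, e ≠ f →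
      (a e + ∑ i, lam i * b e i) ≠ (a f + ∑ i, lam i * b f i)})
    (h₂ : lam₂ ∈ connectedComponentIn {lam : Fin p → ℝ | ∀ e f : α, e ≠ f →
      (a e + ∑ i, lam i * b e i) ≠ (a f + ∑ i, lam i * b f i)} lam₁) :
    ∀ B, M.IsBase B →
      ((∀ B', M.IsBase B' → (∑ᶠ e ∈ B, (a e + ∑ i, lam₁ i * b e i)) ≤
          ∑ᶠ e ∈ B', (a e + ∑ i, lam₁ i * b e i)) ↔
       (∀ B', M.IsBase B' → (∑ᶠ e ∈ B, (a e + ∑ i, lam₂ i * b e i)) ≤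
          ∑ᶠ e ∈ B', (a e + ∑ i, lam₂ i * b e i))) :=
  same_cell_same_min_basis_general M a b lam₁ lam₂ h₁ h₂
end

section
/- Dual connectedness of hyperplane arrangement cells: for any finite set of hyperplanes in ℝ^d, the graph whose vertices are the cells (connected components of the complement of the union) and whose edges join two cells sharing a common (d−1)-dimensional face is connected. Equivalently: any two cells c₁, c₂ can be joined by a finite sequence of cells in which consecutive cells share a boundary facet. -/
open Module Relation MeasureTheory Filter Topology

namespace ArrWalk

variable {d q : ℕ}

lemma sign_mul_trans {a b c : ℝ} (hab : 0 < a * b) (hbc : 0 < b * c) : 0 < a * c := by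
  have hb : b ≠ 0 := by rintro rfl; simp at hab
  have hb2 : 0 < b ^ 2 := by positivity
  nlinarith [mul_pos hab hbc]

lemma map_add_smul (f : (Fin d → ℝ) →ᵃ[ℝ] ℝ) (x v : Fin d → ℝ) (t : ℝ) :
    f (x + t • v) = f x + t * f.linear v := by
  have h1 : x + t • v = (t • v) +ᵥ x := by
    simp [vadd_eq_add, add_comm]
  rw [h1, f.map_vadd, f.linear.map_smul]
  simp [vadd_eq_add, smul_eq_mul, add_comm]

variable (h : Fin q → ((Fin d → ℝ) →ᵃ[ℝ] ℝ))

def S : Set (Fin d → ℝ) := {y | ∀ i, h i y ≠ 0}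

def chamber (x : Fin d → ℝ) : Set (Fin d → ℝ) := {y | ∀ i, 0 < h i x * h i y}

lemma chamber_isOpen (x : Fin d → ℝ) : IsOpen (chamber h x) := by
  have : chamber h x = ⋂ i, {y | 0 < h i x * h i y} := by
    ext y; simp [chamber, Set.mem_iInter]
  rw [this]
  exact isOpen_iInter_of_finite fun i =>
    isOpen_lt continuous_const (continuous_const.mul (h i).continuous_of_finiteDimensional)

lemma chamber_convex (x : Fin d → ℝ) : Convex ℝ (chamber h x) := by
  intro y hy z hz a b ha hb hab
  intro i
  have h1 := hy i
  have h2 := hz i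
  have := Convex.combo_affine_apply (f := h i) (x := y) (y := z) hab
  rw [this]
  rcases eq_or_lt_of_le ha with rfl | ha'
  · simp only [zero_add] at hab; subst hab; simpa using h2
  · have : 0 < a * (h i x * h i y) + b * (h i x * h i z) :=
      add_pos_of_pos_of_nonneg (mul_pos ha' h1) (mul_nonneg hb h2.le)
    simp only [smul_eq_mul]; nlinarith

lemma mem_chamber_self {x : Fin d → ℝ} (hx : ∀ i, h i x ≠ 0) : x ∈ chamber h x :=
  fun i => mul_self_pos.2 (hx i)

lemma chamber_subset (x : Fin d → ℝ) : chamber h x ⊆ S h := by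
  intro y hy i h0
  have := hy i
  rw [h0, mul_zero] at this
  exact lt_irrefl _ this

lemma mem_chamber_ne {x y : Fin d → ℝ} (hy : y ∈ chamber h x) : ∀ i, h i y ≠ 0 :=
  fun i h0 => by have := hy i; rw [h0, mul_zero] at this; exact lt_irrefl _ this

lemma chamber_eq_of_mem {x y : Fin d → ℝ} (hy : y ∈ chamber h x) :
    chamber h x = chamber h y := by
  ext z
  constructor
  · intro hz i
    exact sign_mul_trans (mul_comm (h i x) (h i y) ▸ hy i) (hz i)
  · intro hz i
    exact sign_mul_trans (hy i) (hz i)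

lemma connectedComponentIn_eq_chamber {x : Fin d → ℝ} (hx : ∀ i, h i x ≠ 0) :
    connectedComponentIn (S h) x = chamber h x := by
  apply Set.Subset.antisymm
  · set U : Set (Fin d → ℝ) := {y | ∃ i, h i x * h i y < 0} with hU
    have hUopen : IsOpen U := by
      have : U = ⋃ i, {y | h i x * h i y < 0} := by ext y; simp [hU]
      rw [this]
      exact isOpen_iUnion fun i =>
        isOpen_lt (continuous_const.mul (h i).continuous_of_finiteDimensional) continuous_const
    have hdisj : Disjoint (chamber h x) U := by
      rw [Set.disjoint_left]
      rintro y hy ⟨i, hi⟩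
      exact absurd (hy i) (not_lt.2 hi.le)
    have hsub : connectedComponentIn (S h) x ⊆ chamber h x ∪ U := by
      intro y hy
      have hyS : y ∈ S h := connectedComponentIn_subset _ _ hy
      by_cases hc : ∀ i, 0 < h i x * h i y
      · exact Or.inl hc
      · push_neg at hc
        obtain ⟨i, hi⟩ := hc
        have : h i x * h i y ≠ 0 := mul_ne_zero (hx i) (hyS i)
        exact Or.inr ⟨i, lt_of_le_of_ne hi this⟩
    have hmem : (connectedComponentIn (S h) x ∩ chamber h x).Nonempty :=
      ⟨x, mem_connectedComponentIn hx, mem_chamber_self h hx⟩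
    exact (isPreconnected_connectedComponentIn).subset_left_of_subset_union
      (chamber_isOpen h x) hUopen hdisj hsub hmem
  · exact (chamber_convex h x).isPreconnected.subset_connectedComponentIn
      (mem_chamber_self h hx) (chamber_subset h x)

lemma closure_chamber_subset (x : Fin d → ℝ) :
    closure (chamber h x) ⊆ {y | ∀ i, 0 ≤ h i x * h i y} := by
  apply closure_minimal
  · intro y hy i; exact (hy i).le
  · have : {y : Fin d → ℝ | ∀ i, 0 ≤ h i x * h i y} = ⋂ i, {y | 0 ≤ h i x * h i y} := by
      ext y; simp
    rw [this]
    exact isClosed_iInter fun i =>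
      isClosed_le continuous_const (continuous_const.mul (h i).continuous_of_finiteDimensional)

lemma F_subset_closure (z v : Fin d → ℝ) (c : ℝ)
    (hpne : ∀ j, h j (z + c • v) ≠ 0)
    (hsame : ∀ j, h j z ≠ 0 → 0 < h j z * h j (z + c • v)) :
    {y | (∀ i, h i z = 0 → h i y = 0) ∧ (∀ j, h j z ≠ 0 → 0 < h j z * h j y)}
      ⊆ closure (chamber h (z + c • v)) := by
  rintro y ⟨hy1, hy2⟩
  set f : ℝ → (Fin d → ℝ) := fun s => y + s • (c • v) with hf
  have hcont : Continuous f := by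
    exact continuous_const.add (continuous_id.smul continuous_const)
  have htend : Tendsto f (𝓝[>] (0:ℝ)) (𝓝 y) := by
    have : Tendsto f (𝓝 (0:ℝ)) (𝓝 y) := by
      have := hcont.tendsto 0
      simpa [hf] using this
    exact this.mono_left nhdsWithin_le_nhds
  have hval : ∀ s : ℝ, ∀ j, h j (f s) = h j y + s * (c * (h j).linear v) := by
    intro s j
    rw [hf]
    simp only
    rw [map_add_smul]
    congr 1
    rw [(h j).linear.map_smul]
    simp [smul_eq_mul]
  -- open condition
  set O : Set (Fin d → ℝ) := {y' | ∀ j, h j z ≠ 0 → 0 < h j z * h j y'} with hO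
  have hOopen : IsOpen O := by
    have : O = ⋂ j, {y' | h j z ≠ 0 → 0 < h j z * h j y'} := by ext y'; simp [hO]
    rw [this]
    refine isOpen_iInter_of_finite fun j => ?_
    by_cases hj : h j z = 0
    · simp [hj]
    · have : {y' : Fin d → ℝ | h j z ≠ 0 → 0 < h j z * h j y'}
          = {y' | 0 < h j z * h j y'} := by ext y'; simp [hj]
      rw [this]
      exact isOpen_lt continuous_const (continuous_const.mul (h j).continuous_of_finiteDimensional)
  have hyO : y ∈ O := hy2
  have ev1 : ∀ᶠ s in 𝓝[>] (0:ℝ), f s ∈ O := by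
    have : ∀ᶠ s in 𝓝 (0:ℝ), f s ∈ O := by
      have h0 : f 0 ∈ O := by simpa [hf] using hyO
      exact hcont.continuousAt.eventually_mem (hOopen.mem_nhds h0)
    exact this.filter_mono nhdsWithin_le_nhds
  have ev2 : ∀ᶠ s in 𝓝[>] (0:ℝ), (0:ℝ) < s := eventually_mem_nhdsWithin.mono (fun s hs => hs)
  refine mem_closure_of_tendsto htend ?_
  filter_upwards [ev1, ev2] with s hsO hs
  intro j
  by_cases hj : h j z = 0
  · -- h j (z + c•v) = c * L v ≠ 0 ; h j (f s) = s * (c * L v)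
    have hzc : h j (z + c • v) = c * (h j).linear v := by
      rw [map_add_smul, hj, zero_add]
    have hfs : h j (f s) = s * (c * (h j).linear v) := by
      rw [hval s j, hy1 j hj, zero_add]
    have hne0 : c * (h j).linear v ≠ 0 := by rw [← hzc]; exact hpne j
    rw [hzc, hfs]
    have : 0 < (c * (h j).linear v) ^ 2 := by positivity
    nlinarith
  · exact sign_mul_trans (mul_comm (h j z) (h j (z + c • v)) ▸ hsame j hj) (hsO j hj)

lemma finrank_ker_eq (f : (Fin d → ℝ) →ₗ[ℝ] ℝ) (hf : f ≠ 0) :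
    finrank ℝ (LinearMap.ker f) = d - 1 := by
  have hd : finrank ℝ (Fin d → ℝ) = d := Module.finrank_fin_fun ℝ
  have hrn := LinearMap.finrank_range_add_finrank_ker f
  have hrange : LinearMap.range f = ⊤ := by
    rcases Ideal.eq_bot_or_top (LinearMap.range f) with hb | ht
    · exact absurd (LinearMap.range_eq_bot.mp hb) hf
    · exact ht
  rw [hrange, finrank_top, finrank_self, hd] at hrn
  omega

lemma adj_of_crossing
    (cells : Set (Set (Fin d → ℝ)))
    (hcells : cells = {c | ∃ x, (∀ i, h i x ≠ 0) ∧
      c = connectedComponentIn {y | ∀ i, h i y ≠ 0} x})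
    (adj : Set (Fin d → ℝ) → Set (Fin d → ℝ) → Prop)
    (hadj : ∀ c₁ c₂, adj c₁ c₂ ↔ (c₁ ∈ cells ∧ c₂ ∈ cells ∧
      Module.finrank ℝ (affineSpan ℝ (closure c₁ ∩ closure c₂)).direction = d - 1))
    (z v : Fin d → ℝ) (ε : ℝ) (hε : 0 < ε)
    (hp : ∀ j, h j (z - ε • v) ≠ 0) (hr : ∀ j, h j (z + ε • v) ≠ 0)
    (hsame : ∀ j, h j z ≠ 0 → 0 < h j z * h j (z - ε • v) ∧ 0 < h j z * h j (z + ε • v))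
    (i₀ : Fin q) (hi₀ : h i₀ z = 0)
    (hker : ∀ i j, h i z = 0 → h j z = 0 → LinearMap.ker (h i).linear = LinearMap.ker (h j).linear) :
    adj (chamber h (z - ε • v)) (chamber h (z + ε • v)) := by
  have hSeq : {y : Fin d → ℝ | ∀ i, h i y ≠ 0} = S h := rfl
  have hsub : z - ε • v = z + (-ε) • v := by module
  -- linear form of i₀ at v is nonzero
  have hLv : (h i₀).linear v ≠ 0 := by
    intro h0
    apply hr i₀
    rw [map_add_smul, hi₀, h0, mul_zero, add_zero]
  set L := (h i₀).linear with hL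
  have hi₀p : h i₀ (z - ε • v) = -(ε * L v) := by
    rw [hsub, map_add_smul, hi₀, zero_add]; ring
  have hi₀r : h i₀ (z + ε • v) = ε * L v := by
    rw [map_add_smul, hi₀, zero_add]
  -- the facet-carrier set F
  set F : Set (Fin d → ℝ) :=
    {y | (∀ i, h i z = 0 → h i y = 0) ∧ (∀ j, h j z ≠ 0 → 0 < h j z * h j y)} with hF
  have hFp : F ⊆ closure (chamber h (z - ε • v)) := by
    rw [hsub]
    exact F_subset_closure h z v (-ε) (hsub ▸ hp) (fun j hj => hsub ▸ (hsame j hj).1)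
  have hFr : F ⊆ closure (chamber h (z + ε • v)) :=
    F_subset_closure h z v ε hr (fun j hj => (hsame j hj).2)
  -- upper bound: the intersection of closures lies in the hyperplane of i₀
  set K : AffineSubspace ℝ (Fin d → ℝ) := AffineSubspace.mk' z (LinearMap.ker L) with hK
  have hupper : affineSpan ℝ (closure (chamber h (z - ε • v)) ∩ closure (chamber h (z + ε • v))) ≤ K := by
    rw [affineSpan_le]
    rintro y ⟨hy1, hy2⟩
    have h1 := closure_chamber_subset h (z - ε • v) hy1 i₀
    have h2 := closure_chamber_subset h (z + ε • v) hy2 i₀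
    rw [hi₀p] at h1
    rw [hi₀r] at h2
    have hy0 : h i₀ y = 0 := by
      have hεL : ε * L v ≠ 0 := mul_ne_zero hε.ne' hLv
      have : ε * L v * h i₀ y = 0 := le_antisymm (by linarith) (by linarith)
      rcases mul_eq_zero.mp this with hc | hc
      · exact absurd hc hεL
      · exact hc
    show y ∈ K
    rw [hK, AffineSubspace.mem_mk', LinearMap.mem_ker]
    have hlin : L (y -ᵥ z) = h i₀ y -ᵥ h i₀ z := (h i₀).linearMap_vsub y z
    rw [hlin, hy0, hi₀]
    simp
  have hdirle : (affineSpan ℝ (closure (chamber h (z - ε • v)) ∩ closure (chamber h (z + ε • v)))).direction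
      ≤ LinearMap.ker L := by
    have := AffineSubspace.direction_le hupper
    rwa [hK, AffineSubspace.direction_mk'] at this
  -- lower bound
  have hdirge : LinearMap.ker L ≤
      (affineSpan ℝ (closure (chamber h (z - ε • v)) ∩ closure (chamber h (z + ε • v)))).direction := by
    intro w hw
    -- find t ≠ 0 with z + t • w ∈ F
    set O : Set (Fin d → ℝ) := {y' | ∀ j, h j z ≠ 0 → 0 < h j z * h j y'} with hO
    have hOopen : IsOpen O := by
      have : O = ⋂ j, {y' | h j z ≠ 0 → 0 < h j z * h j y'} := by ext y'; simp [hO]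
      rw [this]
      refine isOpen_iInter_of_finite fun j => ?_
      by_cases hj : h j z = 0
      · simp [hj]
      · have : {y' : Fin d → ℝ | h j z ≠ 0 → 0 < h j z * h j y'}
            = {y' | 0 < h j z * h j y'} := by ext y'; simp [hj]
        rw [this]
        exact isOpen_lt continuous_const (continuous_const.mul (h j).continuous_of_finiteDimensional)
    have hzO : z ∈ O := fun j hj => mul_self_pos.2 hj
    have hcont : Continuous (fun t : ℝ => z + t • w) :=
      continuous_const.add (continuous_id.smul continuous_const)
    have hev : ∀ᶠ t in 𝓝[≠] (0:ℝ), z + t • w ∈ O := by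
      have : ∀ᶠ t in 𝓝 (0:ℝ), z + t • w ∈ O := by
        have h0 : z + (0:ℝ) • w ∈ O := by simpa using hzO
        exact hcont.continuousAt.eventually_mem (hOopen.mem_nhds h0)
      exact this.filter_mono nhdsWithin_le_nhds
    have hne : ∀ᶠ t in 𝓝[≠] (0:ℝ), t ≠ 0 := eventually_mem_nhdsWithin.mono (fun t ht => ht)
    obtain ⟨t, htO, ht0⟩ := (hev.and hne).exists
    -- z ∈ F and z + t•w ∈ F
    have hzF : z ∈ F := ⟨fun i hi => hi, hzO⟩
    have htF : z + t • w ∈ F := by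
      refine ⟨fun i hi => ?_, htO⟩
      have hLi : (h i).linear w = 0 := by
        have hmem : w ∈ LinearMap.ker (h i).linear := by
          rw [← hker i₀ i hi₀ hi]; exact hw
        exact hmem
      rw [map_add_smul, hi, hLi, mul_zero, add_zero]
    have hz1 : z ∈ affineSpan ℝ (closure (chamber h (z - ε • v)) ∩ closure (chamber h (z + ε • v))) :=
      subset_affineSpan _ _ ⟨hFp hzF, hFr hzF⟩
    have hz2 : z + t • w ∈ affineSpan ℝ (closure (chamber h (z - ε • v)) ∩ closure (chamber h (z + ε • v))) :=
      subset_affineSpan _ _ ⟨hFp htF, hFr htF⟩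
    have hmem : (z + t • w) -ᵥ z ∈
        (affineSpan ℝ (closure (chamber h (z - ε • v)) ∩ closure (chamber h (z + ε • v)))).direction :=
      AffineSubspace.vsub_mem_direction hz2 hz1
    have hvs : (z + t • w) -ᵥ z = t • w := by
      simp [vsub_eq_sub]
    rw [hvs] at hmem
    have := Submodule.smul_mem _ t⁻¹ hmem
    rwa [smul_smul, inv_mul_cancel₀ ht0, one_smul] at this
  have hdir : (affineSpan ℝ (closure (chamber h (z - ε • v)) ∩ closure (chamber h (z + ε • v)))).direction
      = LinearMap.ker L := le_antisymm hdirle hdirge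
  rw [hadj]
  refine ⟨?_, ?_, ?_⟩
  · rw [hcells]
    exact ⟨z - ε • v, hp, (connectedComponentIn_eq_chamber h hp).symm⟩
  · rw [hcells]
    exact ⟨z + ε • v, hr, (connectedComponentIn_eq_chamber h hr).symm⟩
  · rw [hdir]
    exact finrank_ker_eq L (by intro h0; exact hLv (by rw [h0]; rfl))
lemma exists_generic (hne : ∀ i, (h i).linear ≠ 0) (x y : Fin d → ℝ)
    (hx : ∀ i, h i x ≠ 0) (hy : ∀ i, h i y ≠ 0) :
    ∃ y', y' ∈ chamber h y ∧
      ∀ t : ℝ, ∀ i j, h i (x + t • (y' - x)) = 0 → h j (x + t • (y' - x)) = 0 →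
        LinearMap.ker (h i).linear = LinearMap.ker (h j).linear := by
  classical
  set Bad : Fin q → Fin q → Set (Fin d → ℝ) := fun i j =>
    {y' | ∃ t : ℝ, h i (x + t • (y' - x)) = 0 ∧ h j (x + t • (y' - x)) = 0 ∧
      LinearMap.ker (h i).linear ≠ LinearMap.ker (h j).linear} with hBadDef
  have hBad : ∀ i j, volume (Bad i j) = 0 := by
    intro i j
    by_cases hk : LinearMap.ker (h i).linear = LinearMap.ker (h j).linear
    · have : Bad i j = ∅ := by
        ext y'; simp only [hBadDef, Set.mem_setOf_eq, Set.mem_empty_iff_false, iff_false]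
        rintro ⟨t, _, _, hne'⟩; exact hne' hk
      rw [this]; simp
    by_cases hz : ∃ a, h i a = 0 ∧ h j a = 0
    · obtain ⟨a, hai, haj⟩ := hz
      set A : AffineSubspace ℝ (Fin d → ℝ) :=
        AffineSubspace.mk' a (LinearMap.ker (h i).linear ⊓ LinearMap.ker (h j).linear) with hA
      set M : AffineSubspace ℝ (Fin d → ℝ) := affineSpan ℝ (insert x (A : Set (Fin d → ℝ))) with hM
      have hxM : x ∈ M := subset_affineSpan _ _ (Set.mem_insert _ _)
      have hsubM : Bad i j ⊆ (M : Set (Fin d → ℝ)) := by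
        rintro y' ⟨t, hti, htj, -⟩
        have ht0 : t ≠ 0 := by
          rintro rfl
          simp at hti
          exact hx i hti
        have hγA : x + t • (y' - x) ∈ A := by
          rw [hA, AffineSubspace.mem_mk']
          refine Submodule.mem_inf.mpr ⟨?_, ?_⟩
          · show (h i).linear (x + t • (y' - x) -ᵥ a) = 0
            have := (h i).linearMap_vsub (x + t • (y' - x)) a
            rw [this, hti, hai]; simp
          · show (h j).linear (x + t • (y' - x) -ᵥ a) = 0
            have := (h j).linearMap_vsub (x + t • (y' - x)) a
            rw [this, htj, haj]; simp
        have hγM : x + t • (y' - x) ∈ M :=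
          subset_affineSpan _ _ (Set.mem_insert_of_mem _ hγA)
        have hy'eq : y' = t⁻¹ • ((x + t • (y' - x)) -ᵥ x) +ᵥ x := by
          rw [vsub_eq_sub]
          simp only [add_sub_cancel_left, vadd_eq_add, smul_smul, inv_mul_cancel₀ ht0, one_smul]
          abel
        rw [hy'eq]
        exact AffineSubspace.smul_vsub_vadd_mem M t⁻¹ hγM hxM hxM
      have hMne : M ≠ ⊤ := by
        intro htop
        have haA : a ∈ A := by rw [hA]; exact AffineSubspace.self_mem_mk' _ _
        have hdirM : M.direction =
            Submodule.span ℝ {x -ᵥ a} ⊔ (LinearMap.ker (h i).linear ⊓ LinearMap.ker (h j).linear) := by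
          rw [hM, AffineSubspace.direction_affineSpan_insert haA, hA, AffineSubspace.direction_mk']
        have hxa : x -ᵥ a ≠ 0 := by
          intro h0
          have : x = a := by rwa [vsub_eq_sub, sub_eq_zero] at h0
          exact hx i (this ▸ hai)
        have hsp : finrank ℝ (Submodule.span ℝ {x -ᵥ a}) = 1 := finrank_span_singleton hxa
        have hinf : (LinearMap.ker (h i).linear ⊓ LinearMap.ker (h j).linear) < LinearMap.ker (h i).linear := by
          rcases lt_or_eq_of_le (inf_le_left (b := LinearMap.ker (h j).linear)) with hlt | heq
          · exact hlt
          · exfalso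
            have hle : LinearMap.ker (h i).linear ≤ LinearMap.ker (h j).linear := by
              rw [← heq]; exact inf_le_right
            have : LinearMap.ker (h i).linear = LinearMap.ker (h j).linear := by
              apply Submodule.eq_of_le_of_finrank_le hle
              rw [finrank_ker_eq (h j).linear (hne j),
                finrank_ker_eq (h i).linear (hne i)]
            exact hk this
        have hfinf : finrank ℝ ((LinearMap.ker (h i).linear ⊓ LinearMap.ker (h j).linear) : Submodule ℝ (Fin d → ℝ)) < d - 1 := by
          have := Submodule.finrank_lt_finrank_of_lt hinf
          rwa [finrank_ker_eq (h i).linear (hne i)] at this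
        have hsup : finrank ℝ M.direction ≤ 1 +
            finrank ℝ ((LinearMap.ker (h i).linear ⊓ LinearMap.ker (h j).linear) : Submodule ℝ (Fin d → ℝ)) := by
          rw [hdirM]
          have := Submodule.finrank_sup_add_finrank_inf_eq
            (Submodule.span ℝ {x -ᵥ a})
            (LinearMap.ker (h i).linear ⊓ LinearMap.ker (h j).linear)
          omega
        have htopd : finrank ℝ M.direction = d := by
          rw [htop, AffineSubspace.direction_top, finrank_top, Module.finrank_fin_fun]
        omega
      exact measure_mono_null hsubM (Measure.addHaar_affineSubspace volume M hMne)
    · have : Bad i j = ∅ := by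
        ext y'
        simp only [hBadDef, Set.mem_setOf_eq, Set.mem_empty_iff_false, iff_false]
        rintro ⟨t, hti, htj, -⟩
        exact hz ⟨x + t • (y' - x), hti, htj⟩
      rw [this]; simp
  have hU : volume (⋃ i, ⋃ j, Bad i j) = 0 := by
    rw [measure_iUnion_null_iff]
    intro i
    rw [measure_iUnion_null_iff]
    intro j
    exact hBad i j
  have hpos : 0 < volume (chamber h y) :=
    (chamber_isOpen h y).measure_pos volume ⟨y, mem_chamber_self h hy⟩
  have hnsub : ¬ chamber h y ⊆ ⋃ i, ⋃ j, Bad i j := by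
    intro hsub
    have := measure_mono_null hsub hU
    rw [this] at hpos
    exact lt_irrefl _ hpos
  obtain ⟨y', hy'c, hy'b⟩ := Set.not_subset.mp hnsub
  refine ⟨y', hy'c, ?_⟩
  intro t i j hi hj
  by_contra hne'
  exact hy'b (Set.mem_iUnion.mpr ⟨i, Set.mem_iUnion.mpr ⟨j, ⟨t, hi, hj, hne'⟩⟩⟩)
set_option maxHeartbeats 1000000 in
lemma walk
    (cells : Set (Set (Fin d → ℝ)))
    (hcells : cells = {c | ∃ x, (∀ i, h i x ≠ 0) ∧
      c = connectedComponentIn {y | ∀ i, h i y ≠ 0} x})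
    (adj : Set (Fin d → ℝ) → Set (Fin d → ℝ) → Prop)
    (hadj : ∀ c₁ c₂, adj c₁ c₂ ↔ (c₁ ∈ cells ∧ c₂ ∈ cells ∧
      Module.finrank ℝ (affineSpan ℝ (closure c₁ ∩ closure c₂)).direction = d - 1))
    (y : Fin d → ℝ) (hy : ∀ i, h i y ≠ 0) :
    ∀ n : ℕ, ∀ x : Fin d → ℝ, (∀ i, h i x ≠ 0) →
    (∀ t : ℝ, ∀ i j, h i (x + t • (y - x)) = 0 → h j (x + t • (y - x)) = 0 →
        LinearMap.ker (h i).linear = LinearMap.ker (h j).linear) →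
    (Finset.univ.filter (fun i => h i x * h i y < 0)).card ≤ n →
    Relation.ReflTransGen adj (chamber h x) (chamber h y) := by
  classical
  intro n
  induction n with
  | zero =>
    intro x hx hgen hcard
    have hD : (Finset.univ.filter (fun i => h i x * h i y < 0)) = ∅ :=
      Finset.card_eq_zero.mp (Nat.le_zero.mp hcard)
    have hmem : y ∈ chamber h x := by
      intro i
      have h1 : ¬ (h i x * h i y < 0) := by
        intro hlt
        have : i ∈ Finset.univ.filter (fun i => h i x * h i y < 0) :=
          Finset.mem_filter.mpr ⟨Finset.mem_univ i, hlt⟩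
        rw [hD] at this; exact absurd this (Finset.notMem_empty i)
      exact lt_of_le_of_ne (not_lt.mp h1) (Ne.symm (mul_ne_zero (hx i) (hy i)))
    rw [chamber_eq_of_mem h hmem]
  | succ n IH =>
    intro x hx hgen hcard
    set D := Finset.univ.filter (fun i => h i x * h i y < 0) with hDdef
    rcases D.eq_empty_or_nonempty with hD | hD
    · -- same as base case
      have hmem : y ∈ chamber h x := by
        intro i
        have h1 : ¬ (h i x * h i y < 0) := by
          intro hlt
          have : i ∈ D := Finset.mem_filter.mpr ⟨Finset.mem_univ i, hlt⟩
          rw [hD] at this; exact absurd this (Finset.notMem_empty i)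
        exact lt_of_le_of_ne (not_lt.mp h1) (Ne.symm (mul_ne_zero (hx i) (hy i)))
      rw [chamber_eq_of_mem h hmem]
    · -- there is a crossing
      set r : Fin q → ℝ := fun j => h j x / (h j x - h j y) with hrdef
      have hkey : ∀ j (t : ℝ), h j (x + t • (y - x)) = h j x + t * (h j y - h j x) := by
        intro j t
        rw [map_add_smul]
        congr 2
        have := (h j).linearMap_vsub y x
        simpa [vsub_eq_sub] using this
      have froot : ∀ j, h j x ≠ h j y → ∀ t : ℝ,
          h j (x + t • (y - x)) = (t - r j) * (h j y - h j x) := by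
        intro j hj t
        rw [hkey]
        have hs : h j x - h j y ≠ 0 := sub_ne_zero.mpr hj
        rw [hrdef]
        field_simp
        ring
      have fconst : ∀ j, h j x = h j y → ∀ t : ℝ, h j (x + t • (y - x)) = h j x := by
        intro j hj t
        rw [hkey, ← hj, sub_self, mul_zero, add_zero]
      have hDslope : ∀ j ∈ D, h j x ≠ h j y := by
        intro j hj heq
        have := (Finset.mem_filter.mp hj).2
        rw [← heq] at this
        exact absurd this (not_lt.mpr (mul_self_nonneg _))
      have hx0 : ∀ j, h j x ≠ h j y → h j x = (0 - r j) * (h j y - h j x) := by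
        intro j hj
        have := froot j hj 0
        simpa using this
      have hy1 : ∀ j, h j x ≠ h j y → h j y = (1 - r j) * (h j y - h j x) := by
        intro j hj
        have := froot j hj 1
        simpa using this
      have hrD : ∀ j ∈ D, 0 < r j ∧ r j < 1 := by
        intro j hj
        have hprod := (Finset.mem_filter.mp hj).2
        have hsl := hDslope j hj
        have hprod' : ((0 - r j) * (h j y - h j x)) * ((1 - r j) * (h j y - h j x)) < 0 := by
          rw [← hx0 j hsl, ← hy1 j hsl]; exact hprod
        have hq : r j * (r j - 1) < 0 := by nlinarith [sq_nonneg (h j y - h j x)]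
        constructor <;> nlinarith
      have houtside : ∀ j, h j x ≠ h j y → j ∉ D → r j < 0 ∨ 1 < r j := by
        intro j hsl hj
        have h1 : ¬ (h j x * h j y < 0) := by
          intro hlt; exact hj (Finset.mem_filter.mpr ⟨Finset.mem_univ j, hlt⟩)
        have hprod : 0 < h j x * h j y :=
          lt_of_le_of_ne (not_lt.mp h1) (Ne.symm (mul_ne_zero (hx j) (hy j)))
        have hprod' : 0 < ((0 - r j) * (h j y - h j x)) * ((1 - r j) * (h j y - h j x)) := by
          rw [← hx0 j hsl, ← hy1 j hsl]; exact hprod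
        have hq : 0 < r j * (r j - 1) := by nlinarith [sq_nonneg (h j y - h j x)]
        rcases lt_or_ge (r j) 0 with hlt | hge
        · exact Or.inl hlt
        · right; nlinarith
      -- the first crossing time
      have himg : (D.image r).Nonempty := hD.image r
      set tstar : ℝ := (D.image r).min' himg with htsdef
      obtain ⟨i₀, hi₀D, hi₀r⟩ : ∃ i₀ ∈ D, r i₀ = tstar :=
        Finset.mem_image.mp ((D.image r).min'_mem himg)
      have htstar_le : ∀ j ∈ D, tstar ≤ r j := fun j hj =>
        Finset.min'_le _ _ (Finset.mem_image_of_mem r hj)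
      have h0t : 0 < tstar := hi₀r ▸ (hrD i₀ hi₀D).1
      have ht1 : tstar < 1 := hi₀r ▸ (hrD i₀ hi₀D).2
      -- choose ε
      set E : Finset ℝ := insert tstar (insert (1 - tstar)
        ((Finset.univ.filter (fun j => h j x ≠ h j y ∧ r j ≠ tstar)).image
          (fun j => |r j - tstar|))) with hEdef
      have hEne : E.Nonempty := ⟨tstar, Finset.mem_insert_self _ _⟩
      have hEpos : ∀ e ∈ E, 0 < e := by
        intro e he
        rw [hEdef] at he
        simp only [Finset.mem_insert, Finset.mem_image, Finset.mem_filter] at he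
        rcases he with rfl | rfl | ⟨j, ⟨-, -, hj2⟩, rfl⟩
        · exact h0t
        · linarith
        · exact abs_pos.mpr (sub_ne_zero.mpr hj2)
      have hmin : 0 < E.min' hEne := hEpos _ (E.min'_mem hEne)
      set ε : ℝ := E.min' hEne / 2 with hεdef
      have hε : 0 < ε := by positivity
      have hεlt : ∀ e ∈ E, ε < e := by
        intro e he
        calc ε < E.min' hEne := by rw [hεdef]; linarith
        _ ≤ e := Finset.min'_le _ _ he
      have hεt : ε < tstar := hεlt _ (Finset.mem_insert_self _ _)
      have hε1 : ε < 1 - tstar :=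
        hεlt _ (Finset.mem_insert_of_mem (Finset.mem_insert_self _ _))
      have hεr : ∀ j, h j x ≠ h j y → r j ≠ tstar → ε < |r j - tstar| := by
        intro j h1 h2
        refine hεlt _ ?_
        rw [hEdef]
        refine Finset.mem_insert_of_mem (Finset.mem_insert_of_mem ?_)
        exact Finset.mem_image.mpr ⟨j, Finset.mem_filter.mpr ⟨Finset.mem_univ j, h1, h2⟩, rfl⟩
      -- points
      set z : Fin d → ℝ := x + tstar • (y - x) with hzdef
      set v : Fin d → ℝ := y - x with hvdef
      have hpz : x + (tstar - ε) • (y - x) = z - ε • v := by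
        rw [hzdef, hvdef]; module
      have hrz : x + (tstar + ε) • (y - x) = z + ε • v := by
        rw [hzdef, hvdef]; module
      -- nonvanishing before/after the crossing
      have hnz : ∀ (s : ℝ), s ≠ 0 → |s| ≤ ε → ∀ j, h j (x + (tstar + s) • (y - x)) ≠ 0 := by
        intro s hs0 hsabs j
        by_cases hsl : h j x = h j y
        · rw [fconst j hsl]; exact hx j
        · rw [froot j hsl]
          refine mul_ne_zero ?_ (sub_ne_zero.mpr (Ne.symm hsl))
          intro h0
          by_cases hrt : r j = tstar
          · rw [hrt] at h0; apply hs0; linarith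
          · have habs := hεr j hsl hrt
            have : r j - tstar = s := by linarith
            rw [this] at habs
            exact absurd habs (not_lt.mpr hsabs)
      have hp' : ∀ j, h j (z - ε • v) ≠ 0 := by
        rw [← hpz]
        have : tstar - ε = tstar + (-ε) := by ring
        rw [this]
        exact hnz (-ε) (by linarith) (by rw [abs_neg, abs_of_pos hε])
      have hr' : ∀ j, h j (z + ε • v) ≠ 0 := by
        rw [← hrz]
        exact hnz ε hε.ne' (by rw [abs_of_pos hε])
      have hsame' : ∀ j, h j z ≠ 0 →
          0 < h j z * h j (z - ε • v) ∧ 0 < h j z * h j (z + ε • v) := by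
        intro j hjz
        rw [← hpz, ← hrz]
        by_cases hsl : h j x = h j y
        · rw [hzdef] at hjz
          rw [fconst j hsl, fconst j hsl, fconst j hsl] at *
          exact ⟨mul_self_pos.2 (hx j), mul_self_pos.2 (hx j)⟩
        · have hs2 : (0:ℝ) < (h j y - h j x) ^ 2 := by
            have := sub_ne_zero.mpr (Ne.symm hsl); positivity
          have hrt : r j ≠ tstar := by
            intro h0
            apply hjz
            rw [hzdef, froot j hsl, h0, sub_self, zero_mul]
          have habs := hεr j hsl hrt
          rw [hzdef, froot j hsl, froot j hsl, froot j hsl]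
          rcases lt_abs.mp habs with hcase | hcase
          · refine ⟨?_, ?_⟩
            · have f1 : 0 < (r j - tstar) * (r j - tstar + ε) :=
                mul_pos (by linarith) (by linarith)
              nlinarith [mul_pos f1 hs2]
            · have f1 : 0 < (r j - tstar) * (r j - tstar - ε) :=
                mul_pos (by linarith) (by linarith)
              nlinarith [mul_pos f1 hs2]
          · refine ⟨?_, ?_⟩
            · have f1 : 0 < (tstar - r j) * (tstar - r j - ε) :=
                mul_pos (by linarith) (by linarith)
              nlinarith [mul_pos f1 hs2]
            · have f1 : 0 < (tstar - r j) * (tstar - r j + ε) :=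
                mul_pos (by linarith) (by linarith)
              nlinarith [mul_pos f1 hs2]
      have hi₀z : h i₀ z = 0 := by
        rw [hzdef, froot i₀ (hDslope i₀ hi₀D), hi₀r, sub_self, zero_mul]
      have hker' : ∀ i j, h i z = 0 → h j z = 0 →
          LinearMap.ker (h i).linear = LinearMap.ker (h j).linear := by
        intro i j hi hj
        exact hgen tstar i j (by rw [← hzdef]; exact hi) (by rw [← hzdef]; exact hj)
      have adjstep := adj_of_crossing h cells hcells adj hadj z v ε hε hp' hr' hsame' i₀ hi₀z hker'
      -- chamber x = chamber p
      have hmemp : z - ε • v ∈ chamber h x := by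
        rw [← hpz]
        intro j
        by_cases hsl : h j x = h j y
        · rw [fconst j hsl]; exact mul_self_pos.2 (hx j)
        · have hs2 : (0:ℝ) < (h j y - h j x) ^ 2 := by
            have := sub_ne_zero.mpr (Ne.symm hsl); positivity
          have ekey : h j x * h j (x + (tstar - ε) • (y - x)) =
              ((0 - r j) * (tstar - ε - r j)) * (h j y - h j x) ^ 2 := by
            rw [froot j hsl (tstar - ε)]
            linear_combination ((tstar - ε - r j) * (h j y - h j x)) * hx0 j hsl
          rw [ekey]
          refine mul_pos ?_ hs2
          by_cases hjD : j ∈ D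
          · have h1 := (hrD j hjD).1
            have h2 := htstar_le j hjD
            exact mul_pos_of_neg_of_neg (by linarith) (by linarith)
          · rcases houtside j hsl hjD with hc | hc
            · exact mul_pos (by linarith) (by linarith)
            · exact mul_pos_of_neg_of_neg (by linarith) (by linarith)
      -- the new separating set is smaller
      set D' := Finset.univ.filter (fun j => h j (z + ε • v) * h j y < 0) with hD'def
      have hD'sub : D' ⊆ D.erase i₀ := by
        intro j hj
        have hprod : h j (z + ε • v) * h j y < 0 := (Finset.mem_filter.mp hj).2
        rw [← hrz] at hprod
        have hsl : h j x ≠ h j y := by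
          intro heq
          rw [fconst j heq, heq] at hprod
          exact absurd hprod (not_lt.mpr (mul_self_nonneg _))
        have hs2 : (0:ℝ) < (h j y - h j x) ^ 2 := by
          have := sub_ne_zero.mpr (Ne.symm hsl); positivity
        have ekey : h j (x + (tstar + ε) • (y - x)) * h j y =
            ((tstar + ε - r j) * (1 - r j)) * (h j y - h j x) ^ 2 := by
          rw [froot j hsl (tstar + ε)]
          linear_combination ((tstar + ε - r j) * (h j y - h j x)) * hy1 j hsl
        rw [ekey] at hprod
        have hq : (tstar + ε - r j) * (1 - r j) < 0 := by nlinarith [hs2]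
        have hb1 : tstar + ε < r j := by nlinarith [hq, hε1]
        have hb2 : r j < 1 := by nlinarith [hq, hε1]
        have hjD : j ∈ D := by
          refine Finset.mem_filter.mpr ⟨Finset.mem_univ j, ?_⟩
          have ekey2 : h j x * h j y = ((0 - r j) * (1 - r j)) * (h j y - h j x) ^ 2 := by
            linear_combination (h j y) * hx0 j hsl + ((0 - r j) * (h j y - h j x)) * hy1 j hsl
          rw [ekey2]
          exact mul_neg_of_neg_of_pos (mul_neg_of_neg_of_pos (by linarith) (by linarith)) hs2
        refine Finset.mem_erase.mpr ⟨?_, hjD⟩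
        intro heq
        rw [heq, hi₀r] at hb1
        linarith
      have hcard' : D'.card ≤ n := by
        have h1 := Finset.card_le_card hD'sub
        have h2 := Finset.card_erase_of_mem hi₀D
        have h3 : 1 ≤ D.card := Finset.card_pos.mpr hD
        omega
      -- genericity for the new start point
      have hrpt : ∀ t : ℝ, (z + ε • v) + t • (y - (z + ε • v))
          = x + ((tstar + ε) + t * (1 - (tstar + ε))) • (y - x) := by
        intro t
        rw [hzdef, hvdef]
        module
      have hgen' : ∀ t : ℝ, ∀ i j, h i ((z + ε • v) + t • (y - (z + ε • v))) = 0 →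
          h j ((z + ε • v) + t • (y - (z + ε • v))) = 0 →
          LinearMap.ker (h i).linear = LinearMap.ker (h j).linear := by
        intro t i j hi hj
        rw [hrpt t] at hi hj
        exact hgen _ i j hi hj
      have hIH := IH (z + ε • v) hr' hgen' (by rw [← hD'def]; exact hcard')
      rw [chamber_eq_of_mem h hmemp]
      exact Relation.ReflTransGen.head adjstep hIH
end ArrWalk

/-- Dual connectedness of a hyperplane arrangement: any two cells (connected
components of the complement of the union of the hyperplanes) can be joined by a
finite sequence of cells in which consecutive cells share a common face of
dimension `d - 1` (a facet). -/
theorem arrangement_incidence_graph_connected {d q : ℕ}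
    (h : Fin q → ((Fin d → ℝ) →ᵃ[ℝ] ℝ)) (hne : ∀ i, (h i).linear ≠ 0)
    (cells : Set (Set (Fin d → ℝ)))
    (hcells : cells = {c | ∃ x, (∀ i, h i x ≠ 0) ∧
      c = connectedComponentIn {y | ∀ i, h i y ≠ 0} x})
    (adj : Set (Fin d → ℝ) → Set (Fin d → ℝ) → Prop)
    (hadj : ∀ c₁ c₂, adj c₁ c₂ ↔ (c₁ ∈ cells ∧ c₂ ∈ cells ∧
      Module.finrank ℝ (affineSpan ℝ (closure c₁ ∩ closure c₂)).direction = d - 1)) :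
    ∀ c₁ ∈ cells, ∀ c₂ ∈ cells, Relation.ReflTransGen adj c₁ c₂ := by
  intro c₁ hc₁ c₂ hc₂
  rw [hcells] at hc₁ hc₂
  obtain ⟨x, hx, rfl⟩ := hc₁
  obtain ⟨y, hy, rfl⟩ := hc₂
  have e1 : connectedComponentIn {y | ∀ i, h i y ≠ 0} x = ArrWalk.chamber h x :=
    ArrWalk.connectedComponentIn_eq_chamber h hx
  have e2 : connectedComponentIn {y' | ∀ i, h i y' ≠ 0} y = ArrWalk.chamber h y :=
    ArrWalk.connectedComponentIn_eq_chamber h hy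
  rw [e1, e2]
  obtain ⟨y', hy'C, hgen⟩ := ArrWalk.exists_generic h hne x y hx hy
  have hy'ne := ArrWalk.mem_chamber_ne h hy'C
  have hwalk := ArrWalk.walk h cells hcells adj hadj y' hy'ne
    (Finset.univ.filter (fun i => h i x * h i y' < 0)).card x hx hgen le_rfl
  rwa [← ArrWalk.chamber_eq_of_mem h hy'C] at hwalk
end
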